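/- arXiv:1912.04809 — 3 statements merged into one kernel-verified Lean document; each statement's English description precedes it below -/
import Mathlib

section
/- For real numbers z_a, z_b, z_c, z_d: min(z_a+z_b, z_c+z_d) − max(|z_a−z_b|, |z_c−z_d|) = min(z_a+z_d, z_b+z_c) − max(|z_a−z_d|, |z_b−z_c|). -/
/-!
Splitting `min x y - max u v` into the four differences and using
`a + b - |a - b| = 2 • min a b` and `a + b + |a - b| = 2 • max a b`, the left-hand side becomes
`min (2 • min {za, zb, zc, zd}) (za + zb + zc + zd - 2 • max {za, zb, zc, zd})`,
which is symmetric in the four variables; the right-hand side is the same expression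
for the pairing `{za, zd}, {zb, zc}`.
-/

section

variable {α : Type*} [AddCommGroup α] [LinearOrder α] [IsOrderedAddMonoid α]

theorem min_sub_max_eq_min_min (x y u v : α) :
    min x y - max u v = min (min (x - u) (x - v)) (min (y - u) (y - v)) := by
  rw [min_sub_sub_left, min_sub_sub_left, min_sub_sub_right]

theorem add_sub_abs_sub_eq_two_nsmul_min (a b : α) : a + b - |a - b| = 2 • min a b := by
  rw [abs_sub_comm]
  exact (two_nsmul_inf_eq_add_sub_abs_sub a b).symm

theorem add_add_abs_sub_eq_two_nsmul_max (a b : α) : a + b + |a - b| = 2 • max a b := by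
  rw [abs_sub_comm]
  exact (two_nsmul_sup_eq_add_add_abs_sub a b).symm

theorem min_add_sub_max_abs_sub (a b c d : α) :
    min (a + b) (c + d) - max |a - b| |c - d| =
      min (2 • min (min a b) (min c d)) (a + b + c + d - 2 • max (max a b) (max c d)) := by
  have hab : c + d - |a - b| = a + b + c + d - 2 • max a b := by
    rw [← add_add_abs_sub_eq_two_nsmul_max]; abel
  have hcd : a + b - |c - d| = a + b + c + d - 2 • max c d := by
    rw [← add_add_abs_sub_eq_two_nsmul_max]; abel
  have hmin : 2 • min (min a b) (min c d) = min (2 • min a b) (2 • min c d) :=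
    (nsmul_right_mono 2).map_min
  have hmax : a + b + c + d - 2 • max (max a b) (max c d) =
      min (a + b + c + d - 2 • max a b) (a + b + c + d - 2 • max c d) := by
    rw [(nsmul_right_mono 2).map_max, min_sub_sub_left]
  rw [min_sub_max_eq_min_min, add_sub_abs_sub_eq_two_nsmul_min, add_sub_abs_sub_eq_two_nsmul_min,
    hab, hcd, hmin, hmax]
  ac_rfl

end

theorem fiber_lengths_equal (za zb zc zd : ℝ) :
    min (za + zb) (zc + zd) - max |za - zb| |zc - zd| =
      min (za + zd) (zb + zc) - max |za - zd| |zb - zc| := by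
  rw [min_add_sub_max_abs_sub, min_add_sub_max_abs_sub, min_comm zc zd, max_comm zc zd,
    min_min_min_comm za zb zd zc, max_max_max_comm za zb zd zc]
  ring_nf
end

section
/- Let I ⊆ ℂ[x₁,…,x_n] be an ideal with generators f₁,…,f_m, and let I^L = I·ℂ[x₁^{±1},…,x_n^{±1}] be its extension to the Laurent polynomial ring. Then for any w ∈ ℚ^n, the initial ideal in_w(I) contains a monomial if and only if in_w(I^L) contains a monomial. -/
open scoped Classical

/-- The Laurent polynomial ring `ℂ[x₁^{±1},…,x_n^{±1}]` as the monoid algebra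
of the exponent lattice `ℤⁿ`. -/
abbrev LaurentPoly (n : ℕ) := AddMonoidAlgebra ℂ (Fin n →₀ ℤ)

/-- The `w`-weight of an exponent vector `u ∈ ℕⁿ`. -/
noncomputable def pwt {n : ℕ} (w : Fin n → ℚ) (u : Fin n →₀ ℕ) : ℚ :=
  ∑ i, w i * (u i : ℚ)

/-- The `w`-weight of an exponent vector `u ∈ ℤⁿ`. -/
noncomputable def lwt {n : ℕ} (w : Fin n → ℚ) (u : Fin n →₀ ℤ) : ℚ :=
  ∑ i, w i * (u i : ℚ)

/-- The initial form of a polynomial: the sum of its terms whose exponent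
vector has minimal `w`-weight. -/
noncomputable def pinit {n : ℕ} (w : Fin n → ℚ) (f : MvPolynomial (Fin n) ℂ) :
    MvPolynomial (Fin n) ℂ :=
  ∑ u ∈ f.support.filter (fun u => ∀ v ∈ f.support, pwt w u ≤ pwt w v),
    MvPolynomial.monomial u (f.coeff u)

/-- The initial form of a Laurent polynomial. -/
noncomputable def linit {n : ℕ} (w : Fin n → ℚ) (h : LaurentPoly n) : LaurentPoly n :=
  ∑ u ∈ h.coeff.support.filter (fun u => ∀ v ∈ h.coeff.support, lwt w u ≤ lwt w v),
    AddMonoidAlgebra.single u (h.coeff u)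

/-- The initial ideal `in_w(I)` of an ideal of the polynomial ring. -/
noncomputable def pinitIdeal {n : ℕ} (w : Fin n → ℚ) (I : Ideal (MvPolynomial (Fin n) ℂ)) :
    Ideal (MvPolynomial (Fin n) ℂ) :=
  Ideal.span {g | ∃ f ∈ I, g = pinit w f}

/-- The initial ideal `in_w(J)` of an ideal of the Laurent polynomial ring. -/
noncomputable def linitIdeal {n : ℕ} (w : Fin n → ℚ) (J : Ideal (LaurentPoly n)) :
    Ideal (LaurentPoly n) :=
  Ideal.span {g | ∃ f ∈ J, g = linit w f}

/-- The inclusion of the polynomial ring into the Laurent polynomial ring,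
induced by the inclusion of exponent monoids `ℕⁿ ↪ ℤⁿ`. -/
noncomputable def toLaurent (n : ℕ) : MvPolynomial (Fin n) ℂ →+* LaurentPoly n :=
  AddMonoidAlgebra.mapDomainRingHom ℂ
    (Finsupp.mapRange.addMonoidHom (Nat.castAddMonoidHom ℤ))

/-!
Taking initial forms commutes with any injective relabelling of exponents that preserves the
order of `w`-weights; both the inclusion `ℕⁿ ↪ ℤⁿ` and a translation `u ↦ a + u` of `ℤⁿ` are
such relabellings. Since every element of `I^L` lands in `I` after multiplication by a monomial
`x^a` with `a ∈ ℕⁿ`, this gives `in_w(I^L) = in_w(I)^L`. Finally, a Laurent monomial `x^u` lies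
in an extended ideal `J^L` only if some `x^a x^u` with `a ∈ ℕⁿ` is a genuine monomial of `J`.
-/

noncomputable section

namespace AddMonoidAlgebra

variable {R M N Γ : Type*} [Semiring R]

def initForm [LinearOrder Γ] (W : M → Γ) (x : AddMonoidAlgebra R M) : AddMonoidAlgebra R M :=
  ∑ u ∈ x.coeff.support.filter (fun u => ∀ v ∈ x.coeff.support, W u ≤ W v),
    single u (x.coeff u)

theorem initForm_mapDomain [LinearOrder Γ] {σ : M → N} (hσ : Function.Injective σ)
    {W : M → Γ} {W' : N → Γ} (hW : ∀ u v, W' (σ u) ≤ W' (σ v) ↔ W u ≤ W v)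
    (x : AddMonoidAlgebra R M) :
    initForm W' (mapDomain σ x) = mapDomain σ (initForm W x) := by
  have hmin : (mapDomain σ x).coeff.support.filter
        (fun u => ∀ v ∈ (mapDomain σ x).coeff.support, W' u ≤ W' v)
      = (x.coeff.support.filter fun u => ∀ v ∈ x.coeff.support, W u ≤ W v).image σ := by
    rw [coeff_mapDomain, Finsupp.mapDomain_support_of_injective hσ, Finset.filter_image]
    congr 1
    exact Finset.filter_congr fun u _ => by simp [hW]
  rw [initForm, hmin, Finset.sum_image hσ.injOn]
  ext v
  simp [initForm, Finsupp.mapDomain_finsetSum, Finsupp.mapDomain_apply hσ]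

theorem single_one_mul_eq_mapDomain [AddGroup M] (a : M) (x : AddMonoidAlgebra R M) :
    single a 1 * x = mapDomain (a + ·) x := by
  ext v
  rw [coeff_single_mul_apply, one_mul, coeff_mapDomain]
  exact (Finsupp.mapDomain_equiv_apply (f := Equiv.addLeft a) ..).symm

end AddMonoidAlgebra

open AddMonoidAlgebra

section Laurent

variable {n : ℕ}

def toIntExp : (Fin n →₀ ℕ) →+ (Fin n →₀ ℤ) :=
  Finsupp.mapRange.addMonoidHom (Nat.castAddMonoidHom ℤ)

@[simp]
theorem toIntExp_apply (u : Fin n →₀ ℕ) (i : Fin n) : toIntExp u i = u i := rfl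

theorem toIntExp_injective : Function.Injective (toIntExp (n := n)) :=
  Finsupp.mapRange_injective _ Nat.cast_zero Nat.cast_injective

theorem mem_range_toIntExp {v : Fin n →₀ ℤ} (hv : ∀ i, 0 ≤ v i) : v ∈ Set.range toIntExp :=
  ⟨v.mapRange Int.toNat rfl, Finsupp.ext fun i => by simp [hv i]⟩

theorem lwt_toIntExp (w : Fin n → ℚ) (u : Fin n →₀ ℕ) : lwt w (toIntExp u) = pwt w u := by
  simp [lwt, pwt]

theorem lwt_add (w : Fin n → ℚ) (a b : Fin n →₀ ℤ) : lwt w (a + b) = lwt w a + lwt w b := by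
  simp [lwt, mul_add, Finset.sum_add_distrib]

theorem toLaurent_injective : Function.Injective (toLaurent n) :=
  mapDomain_injective toIntExp_injective

theorem toLaurent_monomial (u : Fin n →₀ ℕ) (c : ℂ) :
    toLaurent n (MvPolynomial.monomial u c) = single (toIntExp u) c :=
  mapDomain_single

theorem single_toIntExp_add (a b : Fin n →₀ ℕ) :
    single (toIntExp (a + b)) (1 : ℂ) = single (toIntExp a) 1 * single (toIntExp b) 1 := by
  rw [single_mul_single, map_add, mul_one]

-- `linit w`, `pinit w` and `toLaurent n` are definitionally `initForm (lwt w)`,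
-- `initForm (pwt w)` and `mapDomain toIntExp`.
theorem linit_toLaurent (w : Fin n → ℚ) (f : MvPolynomial (Fin n) ℂ) :
    linit w (toLaurent n f) = toLaurent n (pinit w f) :=
  initForm_mapDomain toIntExp_injective (by simp only [lwt_toIntExp, implies_true]) f

theorem linit_single_one_mul (w : Fin n → ℚ) (a : Fin n →₀ ℤ) (h : LaurentPoly n) :
    linit w (single a 1 * h) = single a 1 * linit w h := by
  simp only [single_one_mul_eq_mapDomain]
  exact initForm_mapDomain (add_right_injective a) (by simp [lwt_add]) h

theorem exists_single_mul_mem_range_toLaurent (q : LaurentPoly n) :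
    ∃ a : Fin n →₀ ℕ, single (toIntExp a) 1 * q ∈ (toLaurent n).range := by
  let a : Fin n →₀ ℕ := Finsupp.equivFunOnFinite.symm fun i =>
    q.coeff.support.sup fun u => (-u i).toNat
  have hsupp : ((single (toIntExp a) 1 * q).coeff.support : Set (Fin n →₀ ℤ)) ⊆
      Set.range toIntExp := by
    intro v hv
    rw [single_one_mul_eq_mapDomain] at hv
    obtain ⟨u, hu, rfl⟩ := Finset.mem_image.mp (Finsupp.mapDomain_support hv)
    refine mem_range_toIntExp fun i => ?_
    have : (-u i).toNat ≤ a i := Finset.le_sup (f := fun u => (-u i).toNat) hu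
    simp only [Finsupp.add_apply, toIntExp_apply]
    omega
  exact ⟨a, comapDomain _ toIntExp_injective _, mapDomain_comapDomain hsupp _⟩

theorem exists_single_mul_mem_image_of_mem_map (J : Ideal (MvPolynomial (Fin n) ℂ))
    {z : LaurentPoly n} (hz : z ∈ J.map (toLaurent n)) :
    ∃ a : Fin n →₀ ℕ, single (toIntExp a) 1 * z ∈ toLaurent n '' J := by
  induction hz using Submodule.span_induction with
  | mem x hx =>
    obtain ⟨f, hf, rfl⟩ := hx
    exact ⟨0, f, hf, by simp [← one_def]⟩
  | zero => exact ⟨0, 0, J.zero_mem, by simp⟩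
  | add x y _ _ hx hy =>
    obtain ⟨a, f, hf, hfx⟩ := hx
    obtain ⟨b, g, hg, hgy⟩ := hy
    refine ⟨a + b, MvPolynomial.monomial b 1 * f + MvPolynomial.monomial a 1 * g,
      J.add_mem (J.mul_mem_left _ hf) (J.mul_mem_left _ hg), ?_⟩
    rw [map_add, map_mul, map_mul, toLaurent_monomial, toLaurent_monomial, hfx, hgy,
      single_toIntExp_add]
    ring
  | smul q x _ hx =>
    obtain ⟨a, f, hf, hfx⟩ := hx
    obtain ⟨b, g, hgq⟩ := exists_single_mul_mem_range_toLaurent q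
    refine ⟨b + a, g * f, J.mul_mem_left _ hf, ?_⟩
    rw [map_mul, hgq, hfx, smul_eq_mul, single_toIntExp_add]
    ring

theorem linitIdeal_map_toLaurent (w : Fin n → ℚ) (I : Ideal (MvPolynomial (Fin n) ℂ)) :
    linitIdeal w (I.map (toLaurent n)) = (pinitIdeal w I).map (toLaurent n) := by
  apply le_antisymm
  · refine Ideal.span_le.mpr ?_
    rintro _ ⟨z, hz, rfl⟩
    obtain ⟨a, f, hf, hfz⟩ := exists_single_mul_mem_image_of_mem_map I hz
    have hshift : single (toIntExp a) 1 * linit w z = toLaurent n (pinit w f) := by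
      rw [← linit_single_one_mul, ← hfz, linit_toLaurent]
    have hinv : linit w z = single (-toIntExp a) 1 * toLaurent n (pinit w f) := by
      rw [← hshift, ← mul_assoc, single_mul_single, neg_add_cancel, one_mul, ← one_def, one_mul]
    rw [SetLike.mem_coe, hinv]
    exact Ideal.mul_mem_left _ _ (Ideal.mem_map_of_mem _ (Ideal.subset_span ⟨f, hf, rfl⟩))
  · refine Ideal.map_le_iff_le_comap.mpr (Ideal.span_le.mpr ?_)
    rintro _ ⟨f, hf, rfl⟩
    rw [SetLike.mem_coe, Ideal.mem_comap, ← linit_toLaurent]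
    exact Ideal.subset_span ⟨toLaurent n f, Ideal.mem_map_of_mem _ hf, rfl⟩

theorem exists_monomial_mem_of_single_mem_map {J : Ideal (MvPolynomial (Fin n) ℂ)}
    {u : Fin n →₀ ℤ} (hu : single u 1 ∈ J.map (toLaurent n)) :
    ∃ m : Fin n →₀ ℕ, MvPolynomial.monomial m 1 ∈ J := by
  obtain ⟨a, f, hf, hfu⟩ := exists_single_mul_mem_image_of_mem_map J hu
  rw [single_mul_single, one_mul] at hfu
  have hmem : toIntExp a + u ∈ (toLaurent n f).coeff.support := by simp [hfu]
  obtain ⟨m, -, hm⟩ := Finset.mem_image.mp (Finsupp.mapDomain_support hmem)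
  have hfm : f = MvPolynomial.monomial m 1 :=
    toLaurent_injective (by rw [toLaurent_monomial, hfu, ← hm]; rfl)
  exact ⟨m, hfm ▸ hf⟩

end Laurent

theorem pinitIdeal_has_monomial_iff_linitIdeal_general (n : ℕ)
    (I : Ideal (MvPolynomial (Fin n) ℂ)) (w : Fin n → ℚ) :
    (∃ u : Fin n →₀ ℕ, MvPolynomial.monomial u (1 : ℂ) ∈ pinitIdeal w I) ↔
      (∃ u : Fin n →₀ ℤ, AddMonoidAlgebra.single u (1 : ℂ) ∈
        linitIdeal w (Ideal.map (toLaurent n) I)) := by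
  rw [linitIdeal_map_toLaurent]
  constructor
  · rintro ⟨u, hu⟩
    exact ⟨toIntExp u, toLaurent_monomial u 1 ▸ Ideal.mem_map_of_mem _ hu⟩
  · rintro ⟨u, hu⟩
    exact exists_monomial_mem_of_single_mem_map hu

/-- Let `I` be a finitely generated ideal of `ℂ[x₁,…,x_n]` and
`I^L = I·ℂ[x₁^{±1},…,x_n^{±1}]` its extension to the Laurent polynomial ring.
For any `w ∈ ℚⁿ`, `in_w(I)` contains a monomial iff `in_w(I^L)` does. -/
theorem pinitIdeal_has_monomial_iff_linitIdeal (n : ℕ)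
    (I : Ideal (MvPolynomial (Fin n) ℂ)) (hI : I.FG) (w : Fin n → ℚ) :
    (∃ u : Fin n →₀ ℕ, MvPolynomial.monomial u (1 : ℂ) ∈ pinitIdeal w I) ↔
      (∃ u : Fin n →₀ ℤ, AddMonoidAlgebra.single u (1 : ℂ) ∈
        linitIdeal w (Ideal.map (toLaurent n) I)) :=
  pinitIdeal_has_monomial_iff_linitIdeal_general n I w

end
end

section
/- For nonnegative reals a_{IJ}, a_{IK}, a_{IL}, a_{JK}, a_{JL}, a_{KL}, set z_a = a_{IJ}+a_{IK}+a_{IL}, z_b = a_{IJ}+a_{JK}+a_{JL}, z_c = a_{IK}+a_{JK}+a_{KL}, z_d = a_{IL}+a_{JL}+a_{KL}, and z = a_{IK}+a_{IL}+a_{JK}+a_{JL}. Then −z + min(z_a+z_d, z_b+z_c) + max(|z_a−z_b|, |z_c−z_d|) = a_{IJ} + |a_{IK} − a_{JL}| + a_{KL}. -/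
/-!
Put `x = aIK - aJL` and `y = aIL - aJK`. Then `za - zb = x + y` and `zc - zd = x - y`, so the
maximum equals `|x| + |y|`; and `za + zd`, `zb + zc` differ by `2y`, so their minimum is half
their sum minus `|y|`. The two copies of `|y|` cancel, leaving `aIJ + |x| + aKL`.
-/

lemma max_abs_add_abs_sub {α : Type*} [AddCommGroup α] [LinearOrder α] [IsOrderedAddMonoid α]
    (x y : α) : max |x + y| |x - y| = |x| + |y| := by
  refine le_antisymm (max_le (abs_add_le x y) (abs_sub x y)) ?_
  rcases le_total 0 x with hx | hx <;> rcases le_total 0 y with hy | hy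
  · rw [abs_of_nonneg hx, abs_of_nonneg hy]
    exact le_max_of_le_left (le_abs_self _)
  · rw [abs_of_nonneg hx, abs_of_nonpos hy, ← sub_eq_add_neg]
    exact le_max_of_le_right (le_abs_self _)
  · rw [abs_of_nonpos hx, abs_of_nonneg hy, neg_add_eq_sub, ← neg_sub]
    exact le_max_of_le_right (neg_le_abs _)
  · rw [abs_of_nonpos hx, abs_of_nonpos hy, ← neg_add]
    exact le_max_of_le_left (neg_le_abs _)

theorem flip_last_coordinate_general (aIJ aIK aIL aJK aJL aKL : ℝ) :
    let za := aIJ + aIK + aIL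
    let zb := aIJ + aJK + aJL
    let zc := aIK + aJK + aKL
    let zd := aIL + aJL + aKL
    let z := aIK + aIL + aJK + aJL
    (-z) + min (za + zd) (zb + zc) + max |za - zb| |zc - zd| =
      aIJ + |aIK - aJL| + aKL := by
  intro za zb zc zd z
  have hmax : max |za - zb| |zc - zd| = |aIK - aJL| + |aIL - aJK| := by
    rw [← max_abs_add_abs_sub]
    congr 2 <;> ring
  have hmin : 2 • min (za + zd) (zb + zc) = za + zd + (zb + zc) - |2 * (aJK - aIL)| := by
    rw [two_nsmul_inf_eq_add_sub_abs_sub]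
    congr 3
    ring
  rw [abs_mul, abs_two, abs_sub_comm, two_nsmul] at hmin
  linarith

theorem flip_last_coordinate (aIJ aIK aIL aJK aJL aKL : ℝ)
    (h1 : 0 ≤ aIJ) (h2 : 0 ≤ aIK) (h3 : 0 ≤ aIL)
    (h4 : 0 ≤ aJK) (h5 : 0 ≤ aJL) (h6 : 0 ≤ aKL) :
    let za := aIJ + aIK + aIL
    let zb := aIJ + aJK + aJL
    let zc := aIK + aJK + aKL
    let zd := aIL + aJL + aKL
    let z := aIK + aIL + aJK + aJL
    (-z) + min (za + zd) (zb + zc) + max |za - zb| |zc - zd| =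
      aIJ + |aIK - aJL| + aKL :=
  flip_last_coordinate_general aIJ aIK aIL aJK aJL aKL
end
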